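/- Let R be a reduced simply laced extended affine root system of rank > 1 and let Π ⊆ R^× satisfy ⟨Π⟩ = ⟨R⟩. Then Π is a reflectable base for R if and only if Π is a minimal generating set for the free abelian group ⟨R⟩, i.e. ⟨Π⟩ = ⟨R⟩ and ⟨Q⟩ ≠ ⟨R⟩ for every proper subset Q ⊊ Π. -/

import Mathlib

open Pointwise
open scoped Classical

noncomputable section

namespace EARSPaper

variable {V : Type*} [AddCommGroup V] [Module ℝ V]

/-- The reflection based on `a`: `x ↦ x - (2 B(x,a)/B(a,a)) • a`.
By the division-by-zero convention this is the identity map when `B a a = 0`. -/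
def reflMap (B : LinearMap.BilinForm ℝ V) (a : V) : V →ₗ[ℝ] V :=
  LinearMap.id - ((2 / B a a) • B.flip a).smulRight a

theorem reflMap_apply (B : LinearMap.BilinForm ℝ V) (a x : V) :
    reflMap B a x = x - (2 / B a a * B x a) • a := by
  simp [reflMap, LinearMap.smulRight_apply, LinearMap.smul_apply, smul_eq_mul]

theorem reflMap_invol (B : LinearMap.BilinForm ℝ V) (a x : V) :
    reflMap B a (reflMap B a x) = x := by
  rcases eq_or_ne (B a a) 0 with h | h
  · simp [reflMap_apply, h]
  · rw [reflMap_apply, reflMap_apply]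
    rw [map_sub, map_smul, LinearMap.sub_apply, LinearMap.smul_apply, smul_eq_mul]
    have hs : 2 / B a a * (B x a - 2 / B a a * B x a * B a a) = -(2 / B a a * B x a) := by
      field_simp
      ring
    rw [hs, neg_smul, sub_neg_eq_add, sub_add_cancel]

/-- The reflection based on `a` as a linear automorphism of `V`. -/
def reflEquiv (B : LinearMap.BilinForm ℝ V) (a : V) : V ≃ₗ[ℝ] V :=
  LinearEquiv.ofLinear (reflMap B a) (reflMap B a)
    (LinearMap.ext fun x => reflMap_invol B a x)
    (LinearMap.ext fun x => reflMap_invol B a x)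

@[simp] theorem reflEquiv_apply (B : LinearMap.BilinForm ℝ V) (a x : V) :
    reflEquiv B a x = reflMap B a x := rfl

/-- The set of nonisotropic elements of `R`. -/
def nonIso (B : LinearMap.BilinForm ℝ V) (R : Set V) : Set V := {a ∈ R | B a a ≠ 0}

/-- Connectedness of a set with respect to the form. -/
def IsConnSet (B : LinearMap.BilinForm ℝ V) (P : Set V) : Prop :=
  ¬ ∃ P₁ P₂ : Set V, P₁.Nonempty ∧ P₂.Nonempty ∧ P₁ ∪ P₂ = P ∧ P₁ ∩ P₂ = ∅ ∧
      ∀ a ∈ P₁, ∀ b ∈ P₂, B a b = 0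

/-- Extended affine root system (axioms (R1)-(R6), for a positive semidefinite
symmetric bilinear form). -/
structure IsEARS (B : LinearMap.BilinForm ℝ V) (R : Set V) : Prop where
  symm : ∀ x y : V, B x y = B y x
  posSemidef : ∀ x : V, 0 ≤ B x x
  lattice : ∃ s : Set V, LinearIndependent ℝ ((↑) : s → V) ∧
      Submodule.span ℝ s = ⊤ ∧ AddSubgroup.closure R = AddSubgroup.closure s
  integrality : ∀ a ∈ nonIso B R, ∀ b ∈ nonIso B R, ∃ n : ℤ, 2 * B b a / B a a = (n : ℝ)
  reflInvariant : ∀ a ∈ nonIso B R, ∀ b ∈ R, reflMap B a b ∈ R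
  isoEq : R ∩ (LinearMap.ker B : Set V) =
      (LinearMap.ker B : Set V) ∩ (nonIso B R - nonIso B R)
  notTwice : ∀ a ∈ nonIso B R, (2 : ℝ) • a ∉ R
  conn : IsConnSet B (nonIso B R)

/-- `R` is reduced: no `α, β ∈ R^×` with `α - 2β ∈ V⁰`. -/
def IsReduced (B : LinearMap.BilinForm ℝ V) (R : Set V) : Prop :=
  ¬ ∃ a ∈ nonIso B R, ∃ b ∈ nonIso B R, a - (2 : ℝ) • b ∈ LinearMap.ker B

/-- `R` is simply laced: the form takes a single value on `R^×`. -/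
def IsSimplyLaced (B : LinearMap.BilinForm ℝ V) (R : Set V) : Prop :=
  ∀ a ∈ nonIso B R, ∀ b ∈ nonIso B R, B a a = B b b

/-- The nullity: the dimension of the radical of the form. -/
def nullity (B : LinearMap.BilinForm ℝ V) : ℕ := Module.finrank ℝ ↥(LinearMap.ker B)

/-- The rank: `dim V - nullity`. -/
def rank (B : LinearMap.BilinForm ℝ V) : ℕ := Module.finrank ℝ V - nullity B

/-- The group generated by the reflections `w_a`, `a ∈ P`, acting on `V`. -/
def weylOn (B : LinearMap.BilinForm ℝ V) (P : Set V) : Subgroup (V ≃ₗ[ℝ] V) :=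
  Subgroup.closure (reflEquiv B '' P)

/-- The set `W_P ⬝ P = {w a : w ∈ W_P, a ∈ P}`. -/
def reflOrbit (B : LinearMap.BilinForm ℝ V) (P : Set V) : Set V :=
  {x | ∃ w ∈ weylOn B P, ∃ a ∈ P, w a = x}

/-- `P` is a reflectable set for `R`: `P ⊆ R^×` and `W_P ⬝ P = R^×`. -/
def IsReflSet (B : LinearMap.BilinForm ℝ V) (R P : Set V) : Prop :=
  P ⊆ nonIso B R ∧ reflOrbit B P = nonIso B R

/-- `P` is a reflectable base for `R`. -/
def IsReflBase (B : LinearMap.BilinForm ℝ V) (R P : Set V) : Prop :=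
  IsReflSet B R P ∧ ∀ Q ⊆ P, Q ≠ P → ¬ IsReflSet B R Q

/-- The space `Ṽ = V ⊕ (V⁰)*`. -/
abbrev VT (B : LinearMap.BilinForm ℝ V) : Type _ := V × Module.Dual ℝ ↥(LinearMap.ker B)

/-- The projection of `V` onto the radical `V⁰` along the fixed complement `V̇`. -/
def projRad (B : LinearMap.BilinForm ℝ V) (Vdot : Submodule ℝ V)
    (hc : IsCompl (LinearMap.ker B) Vdot) : V →ₗ[ℝ] ↥(LinearMap.ker B) :=
  (LinearMap.ker B).linearProjOfIsCompl Vdot hc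

/-- The extension of the form `B` to a nondegenerate symmetric bilinear form on
`Ṽ = V ⊕ (V⁰)*`. -/
def formT (B : LinearMap.BilinForm ℝ V) (Vdot : Submodule ℝ V)
    (hc : IsCompl (LinearMap.ker B) Vdot) : LinearMap.BilinForm ℝ (VT B) :=
  LinearMap.mk₂ ℝ
    (fun x y => B x.1 y.1 + y.2 (projRad B Vdot hc x.1) + x.2 (projRad B Vdot hc y.1))
    (fun x x' y => by
      simp only [Prod.fst_add, Prod.snd_add, map_add, LinearMap.add_apply]; ring)
    (fun c x y => by
      simp only [Prod.smul_fst, Prod.smul_snd, map_smul, LinearMap.smul_apply,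
        smul_eq_mul]; ring)
    (fun x y y' => by
      simp only [Prod.fst_add, Prod.snd_add, map_add, LinearMap.add_apply]; ring)
    (fun c x y => by
      simp only [Prod.smul_fst, Prod.smul_snd, map_smul, LinearMap.smul_apply,
        smul_eq_mul]; ring)

/-- The subgroup of `GL(Ṽ)` generated by the reflections based on `(a, 0)`, `a ∈ P`.
For `P = R^×` this is the extended affine Weyl group `W` of `R`. -/
def weylTilde (B : LinearMap.BilinForm ℝ V) (Vdot : Submodule ℝ V)
    (hc : IsCompl (LinearMap.ker B) Vdot) (P : Set V) :
    Subgroup ((VT B) ≃ₗ[ℝ] (VT B)) :=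
  Subgroup.closure ((fun a => reflEquiv (formT B Vdot hc) (a, 0)) '' P)

theorem reflT_mem_weylTilde (B : LinearMap.BilinForm ℝ V) (Vdot : Submodule ℝ V)
    (hc : IsCompl (LinearMap.ker B) Vdot) {P : Set V} {a : V} (ha : a ∈ P) :
    reflEquiv (formT B Vdot hc) (a, 0) ∈ weylTilde B Vdot hc P :=
  Subgroup.subset_closure ⟨a, ha, rfl⟩

/-- The orbit of `a ∈ V ⊆ Ṽ` under the group generated by the reflections based
on the elements of `G`. -/
def orbitT (B : LinearMap.BilinForm ℝ V) (Vdot : Submodule ℝ V)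
    (hc : IsCompl (LinearMap.ker B) Vdot) (G : Set V) (a : V) : Set V :=
  {x | ∃ w ∈ weylTilde B Vdot hc G, w (a, 0) = (x, 0)}

/-- The set `W_G ⬝ P` computed inside `Ṽ`. -/
def dotSetT (B : LinearMap.BilinForm ℝ V) (Vdot : Submodule ℝ V)
    (hc : IsCompl (LinearMap.ker B) Vdot) (G P : Set V) : Set V :=
  {x | ∃ w ∈ weylTilde B Vdot hc G, ∃ a ∈ P, w (a, 0) = (x, 0)}

/-- `R` is a minimal extended affine root system: for every `α ∈ R^×`,
`W_{R^× ∖ Wα}` is a proper subgroup of `W`. -/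
def IsMinimalEARS (B : LinearMap.BilinForm ℝ V) (Vdot : Submodule ℝ V)
    (hc : IsCompl (LinearMap.ker B) Vdot) (R : Set V) : Prop :=
  ∀ a ∈ nonIso B R,
    weylTilde B Vdot hc (nonIso B R \ orbitT B Vdot hc (nonIso B R) a)
      < weylTilde B Vdot hc (nonIso B R)

/-- The defining relators of the conjugation presented group `Ŵ`:
`ŵ_α² = 1` and `ŵ_α ŵ_β ŵ_α = ŵ_{w_α(β)}`, for `α, β ∈ R^×`. -/
def conjRels (B : LinearMap.BilinForm ℝ V) (R : Set V) :
    Set (FreeGroup ↥(nonIso B R)) :=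
  {r | (∃ a : ↥(nonIso B R), r = FreeGroup.of a * FreeGroup.of a) ∨
      (∃ a b c : ↥(nonIso B R), (c : V) = reflMap B (a : V) (b : V) ∧
        r = FreeGroup.of a * FreeGroup.of b * FreeGroup.of a * (FreeGroup.of c)⁻¹)}

/-- The conjugation presented group `Ŵ` associated with `R`. -/
abbrev WHat (B : LinearMap.BilinForm ℝ V) (R : Set V) := PresentedGroup (conjRels B R)

/-- The generator `ŵ_α` of `Ŵ`. -/
def wHat (B : LinearMap.BilinForm ℝ V) (R : Set V) (a : ↥(nonIso B R)) : WHat B R :=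
  PresentedGroup.of a

/-- `W` has the presentation by conjugation: the canonical epimorphism
`ψ : Ŵ → W`, `ŵ_α ↦ w_α` is an isomorphism. -/
def HasPresByConj (B : LinearMap.BilinForm ℝ V) (Vdot : Submodule ℝ V)
    (hc : IsCompl (LinearMap.ker B) Vdot) (R : Set V) : Prop :=
  ∃ ψ : WHat B R →* ↥(weylTilde B Vdot hc (nonIso B R)),
    (∀ a : ↥(nonIso B R),
      ((ψ (wHat B R a) : (VT B) ≃ₗ[ℝ] (VT B))) =
        reflEquiv (formT B Vdot hc) ((a : V), 0)) ∧
    Function.Bijective ψ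

/-- The restriction of the form to a subspace. -/
def restrictForm (B : LinearMap.BilinForm ℝ V) (U : Submodule ℝ V) :
    LinearMap.BilinForm ℝ ↥U := B.compl₁₂ U.subtype U.subtype

/-- The root system `R_P = R_P^n ∪ R_P^i` associated with a subset `P ⊆ R^×`,
where `R_P^n = W_P ⬝ P` and `R_P^i = (R_P^n - R_P^n) ∩ R⁰`. -/
def earsOf (B : LinearMap.BilinForm ℝ V) (R P : Set V) : Set V :=
  reflOrbit B P ∪
    ((reflOrbit B P - reflOrbit B P) ∩ (R ∩ (LinearMap.ker B : Set V)))

/-- The subgroup `2⟨R⟩` of `⟨R⟩`. -/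
def twoLat (R : Set V) : AddSubgroup V :=
  AddSubgroup.map (AddMonoidHom.mk' (fun x : V => x + x) (fun a b => by abel))
    (AddSubgroup.closure R)


/-! ### Auxiliary development -/

section Aux

variable {V : Type*} [AddCommGroup V] [Module ℝ V]
variable {B : LinearMap.BilinForm ℝ V} {R Q : Set V}

@[simp] theorem lequiv_mul_apply (e₁ e₂ : V ≃ₗ[ℝ] V) (x : V) : (e₁ * e₂) x = e₁ (e₂ x) := rfl

@[simp] theorem lequiv_one_apply (x : V) : (1 : V ≃ₗ[ℝ] V) x = x := rfl

@[simp] theorem lequiv_inv_apply (e : V ≃ₗ[ℝ] V) (x : V) : (e⁻¹ : V ≃ₗ[ℝ] V) x = e.symm x := rfl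

theorem reflEquiv_mul_self (B : LinearMap.BilinForm ℝ V) (a : V) :
    reflEquiv B a * reflEquiv B a = 1 := by
  apply LinearEquiv.ext
  intro x
  simp [reflMap_invol]

theorem reflEquiv_inv (B : LinearMap.BilinForm ℝ V) (a : V) :
    (reflEquiv B a)⁻¹ = reflEquiv B a :=
  inv_eq_of_mul_eq_one_left (reflEquiv_mul_self B a)

/-- An isotropic vector for a positive semidefinite symmetric form is in the radical. -/
theorem rad_of_isotropic (hs : ∀ x y : V, B x y = B y x) (hp : ∀ x : V, 0 ≤ B x x)
    {x : V} (hx : B x x = 0) (y : V) : B x y = 0 := by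
  by_contra hne
  have h1 : ∀ t : ℝ, 0 ≤ 2 * t * B x y + B y y := by
    intro t
    have := hp (t • x + y)
    have hyx : B y x = B x y := hs y x
    simp only [map_add, map_smul, LinearMap.add_apply, LinearMap.smul_apply, smul_eq_mul,
      hx, hyx] at this
    nlinarith [this]
  have h2 : 2 * (-(B y y + 1) / (2 * B x y)) * B x y = -(B y y + 1) := by
    field_simp
  have := h1 (-(B y y + 1) / (2 * B x y))
  rw [h2] at this
  linarith [this]

end Aux
section Aux2

variable {V : Type*} [AddCommGroup V] [Module ℝ V]
variable {B : LinearMap.BilinForm ℝ V} {R Q : Set V}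

theorem B_expand_sub (B : LinearMap.BilinForm ℝ V) (x y a b : V) (s t : ℝ) :
    B (x - s • a) (y - t • b)
      = B x y - t * B x b - s * B a y + s * t * B a b := by
  simp only [map_sub, map_smul, LinearMap.sub_apply, LinearMap.smul_apply, smul_eq_mul]
  ring

theorem B_expand_add (B : LinearMap.BilinForm ℝ V) (x y : V) :
    B (x + y) (x + y) = B x x + B x y + B y x + B y y := by
  simp only [map_add, LinearMap.add_apply]
  ring

theorem B_expand_sub' (B : LinearMap.BilinForm ℝ V) (x y : V) :
    B (x - y) (x - y) = B x x - B x y - B y x + B y y := by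
  simp only [map_sub, LinearMap.sub_apply]
  ring

theorem reflMap_preserves_form (hs : ∀ x y : V, B x y = B y x) (a x y : V) :
    B (reflMap B a x) (reflMap B a y) = B x y := by
  rcases eq_or_ne (B a a) 0 with h | h
  · simp [reflMap_apply, h]
  · rw [reflMap_apply, reflMap_apply, B_expand_sub]
    rw [hs a y]
    field_simp
    ring

theorem reflMap_norm (hs : ∀ x y : V, B x y = B y x) (a x : V) :
    B (reflMap B a x) (reflMap B a x) = B x x :=
  reflMap_preserves_form hs a x x

theorem reflMap_self {a : V} (h : B a a ≠ 0) : reflMap B a a = -a := by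
  rw [reflMap_apply]
  have hc : 2 / B a a * B a a = 2 := by field_simp
  rw [hc]
  rw [two_smul]
  abel

theorem reflMap_of_orth {a x : V} (h : B x a = 0) : reflMap B a x = x := by
  rw [reflMap_apply, h, mul_zero, zero_smul, sub_zero]

/-- Facts from the EARS axioms. -/
theorem norm_pos (hR : IsEARS B R) {a : V} (ha : a ∈ nonIso B R) : 0 < B a a :=
  (hR.posSemidef a).lt_of_ne (Ne.symm ha.2)

theorem reflMap_mem_nonIso (hR : IsEARS B R) {a x : V} (ha : a ∈ nonIso B R)
    (hx : x ∈ nonIso B R) : reflMap B a x ∈ nonIso B R :=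
  ⟨hR.reflInvariant a ha x hx.1, by rw [reflMap_norm hR.symm]; exact hx.2⟩

theorem neg_mem_nonIso (hR : IsEARS B R) {a : V} (ha : a ∈ nonIso B R) :
    -a ∈ nonIso B R := by
  have := reflMap_mem_nonIso hR ha ha
  rwa [reflMap_self ha.2] at this

theorem pairing_bounds (hR : IsEARS B R) (hsl : IsSimplyLaced B R) {a b : V}
    (ha : a ∈ nonIso B R) (hb : b ∈ nonIso B R) :
    B b a ≤ B a a ∧ -B a a ≤ B b a := by
  have hminus := hR.posSemidef (b - a)
  have hplus := hR.posSemidef (b + a)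
  rw [B_expand_sub' B b a] at hminus
  rw [B_expand_add B b a] at hplus
  have hbb : B b b = B a a := hsl b hb a ha
  have hab : B a b = B b a := hR.symm a b
  constructor <;> nlinarith

/-- Classification of pairings between nonisotropic roots in the simply laced case. -/
theorem pairing_classify (hR : IsEARS B R) (hsl : IsSimplyLaced B R) {a b : V}
    (ha : a ∈ nonIso B R) (hb : b ∈ nonIso B R) :
    B b a = 0 ∨ 2 * B b a = B a a ∨ 2 * B b a = -B a a ∨
      (B b a = B a a ∧ ∀ y, B (b - a) y = 0) ∨
      (B b a = -B a a ∧ ∀ y, B (b + a) y = 0) := by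
  obtain ⟨n, hn⟩ := hR.integrality a ha b hb
  have hk : 0 < B a a := norm_pos hR ha
  have hn' : 2 * B b a = n * B a a := by
    field_simp at hn
    linarith [hn]
  obtain ⟨h1, h2⟩ := pairing_bounds hR hsl ha hb
  have hn2 : (n : ℝ) ≤ 2 := by nlinarith
  have hn2' : (-2 : ℝ) ≤ n := by nlinarith
  have hbb : B b b = B a a := hsl b hb a ha
  have hab : B a b = B b a := hR.symm a b
  have hn2i : n ≤ 2 := by exact_mod_cast hn2
  have hn2i' : -2 ≤ n := by exact_mod_cast hn2'
  interval_cases n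
  · refine Or.inr (Or.inr (Or.inr (Or.inr ⟨by push_cast at hn'; linarith, ?_⟩)))
    refine rad_of_isotropic hR.symm hR.posSemidef ?_
    rw [B_expand_add B b a]
    push_cast at hn'
    linarith
  · exact Or.inr (Or.inr (Or.inl (by push_cast at hn'; linarith)))
  · exact Or.inl (by push_cast at hn'; linarith)
  · exact Or.inr (Or.inl (by push_cast at hn'; linarith))
  · refine Or.inr (Or.inr (Or.inr (Or.inl ⟨by push_cast at hn'; linarith, ?_⟩)))
    refine rad_of_isotropic hR.symm hR.posSemidef ?_
    rw [B_expand_sub' B b a]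
    push_cast at hn'
    linarith

theorem reflMap_eq_sub {a b : V} (hk : B a a ≠ 0) (h1 : 2 * B b a = B a a) :
    reflMap B a b = b - a := by
  rw [reflMap_apply]
  have : 2 / B a a * B b a = 1 := by field_simp; linarith
  rw [this, one_smul]

theorem reflMap_eq_add {a b : V} (hk : B a a ≠ 0) (h1 : 2 * B b a = -B a a) :
    reflMap B a b = b + a := by
  rw [reflMap_apply]
  have : 2 / B a a * B b a = -1 := by field_simp; linarith
  rw [this, neg_one_smul]
  abel

end Aux2
section Aux3

variable {V : Type*} [AddCommGroup V] [Module ℝ V]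
variable {B : LinearMap.BilinForm ℝ V} {R Q : Set V}

/-- The basic properties of a single element of the Weyl group `W_Q`. -/
def WProp (B : LinearMap.BilinForm ℝ V) (R Q : Set V) (w : V ≃ₗ[ℝ] V) : Prop :=
  (∀ x y : V, B (w x) (w y) = B x y) ∧
    (∀ x ∈ R, w x ∈ R ∧ w x - x ∈ AddSubgroup.closure Q)

theorem WProp_mul {w w' : V ≃ₗ[ℝ] V} (h : WProp B R Q w) (h' : WProp B R Q w') :
    WProp B R Q (w * w') := by
  constructor
  · intro x y
    rw [lequiv_mul_apply, lequiv_mul_apply, h.1, h'.1]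
  · intro x hx
    obtain ⟨hx1, hx2⟩ := h'.2 x hx
    obtain ⟨hy1, hy2⟩ := h.2 _ hx1
    refine ⟨by rwa [lequiv_mul_apply], ?_⟩
    have : w (w' x) - x = (w (w' x) - w' x) + (w' x - x) := by abel
    rw [lequiv_mul_apply, this]
    exact add_mem hy2 hx2

theorem WProp_refl (hR : IsEARS B R) (hQ : Q ⊆ nonIso B R) {q : V} (hq : q ∈ Q) :
    WProp B R Q (reflEquiv B q) := by
  have hqn : q ∈ nonIso B R := hQ hq
  constructor
  · intro x y
    exact reflMap_preserves_form hR.symm q x y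
  · intro x hx
    refine ⟨hR.reflInvariant q hqn x hx, ?_⟩
    rcases eq_or_ne (B x x) 0 with h0 | h0
    · have : B x q = 0 := rad_of_isotropic hR.symm hR.posSemidef h0 q
      rw [reflEquiv_apply, reflMap_of_orth this, sub_self]
      exact zero_mem _
    · obtain ⟨n, hn⟩ := hR.integrality q hqn x ⟨hx, h0⟩
      rw [reflEquiv_apply, reflMap_apply]
      have hc : 2 / B q q * B x q = (n : ℝ) := by
        rw [← hn]; ring
      rw [hc]
      have : x - (n : ℝ) • q - x = -((n : ℝ) • q) := by abel
      rw [this, Int.cast_smul_eq_zsmul]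
      exact neg_mem (zsmul_mem (AddSubgroup.subset_closure hq) n)

theorem weylOn_props (hR : IsEARS B R) (hQ : Q ⊆ nonIso B R) {w : V ≃ₗ[ℝ] V}
    (hw : w ∈ weylOn B Q) : WProp B R Q w ∧ WProp B R Q w⁻¹ := by
  refine Subgroup.closure_induction (k := reflEquiv B '' Q)
    (p := fun g _ => WProp B R Q g ∧ WProp B R Q g⁻¹) ?_ ?_ ?_ ?_ hw
  · rintro g ⟨q, hq, rfl⟩
    have := WProp_refl hR hQ hq
    rw [reflEquiv_inv]
    exact ⟨this, this⟩
  · have h1 : WProp B R Q 1 := by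
      constructor
      · intro x y; rfl
      · intro x hx
        refine ⟨hx, ?_⟩
        rw [lequiv_one_apply, sub_self]
        exact zero_mem _
    exact ⟨h1, by rw [inv_one]; exact h1⟩
  · rintro g g' _ _ ⟨hg, hgi⟩ ⟨hg', hgi'⟩
    exact ⟨WProp_mul hg hg', by rw [mul_inv_rev]; exact WProp_mul hgi' hgi⟩
  · rintro g _ ⟨hg, hgi⟩
    exact ⟨hgi, by rw [inv_inv]; exact hg⟩

theorem weylOn_form (hR : IsEARS B R) (hQ : Q ⊆ nonIso B R) {w : V ≃ₗ[ℝ] V}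
    (hw : w ∈ weylOn B Q) (x y : V) : B (w x) (w y) = B x y :=
  (weylOn_props hR hQ hw).1.1 x y

/-- Conjugation formula: `w_{w a} = w ∘ w_a ∘ w⁻¹` for `w` preserving the form. -/
theorem reflEquiv_conj {w : V ≃ₗ[ℝ] V} (hw : ∀ x y : V, B (w x) (w y) = B x y) (a : V) :
    reflEquiv B (w a) = w * reflEquiv B a * w⁻¹ := by
  apply LinearEquiv.ext
  intro x
  rw [lequiv_mul_apply, lequiv_mul_apply, lequiv_inv_apply]
  rw [reflEquiv_apply, reflEquiv_apply, reflMap_apply, reflMap_apply]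
  rw [map_sub, map_smul]
  have h1 : B (w a) (w a) = B a a := hw a a
  have h2 : B x (w a) = B (w.symm x) a := by
    conv_lhs => rw [← w.apply_symm_apply x]
    exact hw _ _
  rw [h1, h2, w.apply_symm_apply]

end Aux3
section Aux4

variable {V : Type*} [AddCommGroup V] [Module ℝ V]
variable {B : LinearMap.BilinForm ℝ V} {R Q : Set V}

theorem mem_orbit_of_mem {q : V} (hq : q ∈ Q) : q ∈ reflOrbit B Q :=
  ⟨1, one_mem _, q, hq, rfl⟩

theorem orbit_smul {w : V ≃ₗ[ℝ] V} (hw : w ∈ weylOn B Q) {x : V}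
    (hx : x ∈ reflOrbit B Q) : w x ∈ reflOrbit B Q := by
  obtain ⟨w', hw', a, ha, rfl⟩ := hx
  exact ⟨w * w', mul_mem hw hw', a, ha, rfl⟩

theorem orbit_subset_nonIso (hR : IsEARS B R) (hQ : Q ⊆ nonIso B R) :
    reflOrbit B Q ⊆ nonIso B R := by
  rintro x ⟨w, hw, a, ha, rfl⟩
  have han := hQ ha
  refine ⟨((weylOn_props hR hQ hw).1.2 a han.1).1, ?_⟩
  rw [(weylOn_props hR hQ hw).1.1 a a]
  exact han.2

theorem reflEquiv_mem_weylOn (hR : IsEARS B R) (hQ : Q ⊆ nonIso B R) {x : V}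
    (hx : x ∈ reflOrbit B Q) : reflEquiv B x ∈ weylOn B Q := by
  obtain ⟨w, hw, a, ha, rfl⟩ := hx
  rw [reflEquiv_conj ((weylOn_props hR hQ hw).1.1) a]
  exact mul_mem (mul_mem hw (Subgroup.subset_closure ⟨a, ha, rfl⟩)) (inv_mem hw)

theorem orbit_neg (hQ : Q ⊆ nonIso B R) {x : V} (hx : x ∈ reflOrbit B Q) :
    -x ∈ reflOrbit B Q := by
  obtain ⟨w, hw, a, ha, rfl⟩ := hx
  have hBa : B a a ≠ 0 := (hQ ha).2
  refine ⟨w * reflEquiv B a, mul_mem hw (Subgroup.subset_closure ⟨a, ha, rfl⟩), a, ha, ?_⟩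
  rw [lequiv_mul_apply, reflEquiv_apply, reflMap_self hBa, map_neg]

theorem orbit_reflMap (hR : IsEARS B R) (hQ : Q ⊆ nonIso B R) {x y : V}
    (hx : x ∈ reflOrbit B Q) (hy : y ∈ reflOrbit B Q) :
    reflMap B x y ∈ reflOrbit B Q := by
  have := orbit_smul (reflEquiv_mem_weylOn hR hQ hx) hy
  rwa [reflEquiv_apply] at this

end Aux4
section Aux5

variable {V : Type*} [AddCommGroup V] [Module ℝ V]
variable {B : LinearMap.BilinForm ℝ V} {R Q : Set V}

theorem span_R_eq_top (hR : IsEARS B R) : Submodule.span ℝ R = ⊤ := by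
  obtain ⟨s, _, hsp, hcl⟩ := hR.lattice
  have h1 : s ⊆ (Submodule.span ℝ R : Set V) := by
    intro x hx
    have : x ∈ AddSubgroup.closure s := AddSubgroup.subset_closure hx
    rw [← hcl] at this
    have h2 : AddSubgroup.closure R ≤ (Submodule.span ℝ R).toAddSubgroup :=
      AddSubgroup.closure_le _ |>.mpr Submodule.subset_span
    exact h2 this
  have := Submodule.span_mono (R := ℝ) h1
  rw [Submodule.span_span] at this
  rw [hsp] at this
  exact top_le_iff.mp this

theorem mem_ker_of_rad {x : V} (h : ∀ y, B x y = 0) : x ∈ LinearMap.ker B :=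
  LinearMap.mem_ker.mpr (LinearMap.ext h)

/-- L1: any nonisotropic root pairs to `1` with some nonisotropic root
(rank `> 1` plus connectedness). -/
theorem exists_pairing_one [FiniteDimensional ℝ V] (hR : IsEARS B R)
    (hsl : IsSimplyLaced B R) (hrank : 1 < rank B) {b : V} (hb : b ∈ nonIso B R) :
    ∃ z ∈ nonIso B R, 2 * B z b = B b b := by
  classical
  set P₁ : Set V := {x ∈ nonIso B R | (∀ y, B (x - b) y = 0) ∨ (∀ y, B (x + b) y = 0)}
    with hP₁def
  set P₂ : Set V := nonIso B R \ P₁ with hP₂def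
  have hP₁sub : P₁ ⊆ nonIso B R := fun x hx => hx.1
  have hbP₁ : b ∈ P₁ := ⟨hb, Or.inl (by intro y; rw [sub_self]; simp)⟩
  -- P₂ is nonempty, else rank ≤ 1
  have hP₂ne : P₂.Nonempty := by
    by_contra hne
    rw [Set.not_nonempty_iff_eq_empty] at hne
    have hsub : nonIso B R ⊆ P₁ := by
      intro x hx
      by_contra hxP
      exact (Set.eq_empty_iff_forall_notMem.mp hne x) ⟨hx, hxP⟩
    have hWb : (⊤ : Submodule ℝ V) ≤ (ℝ ∙ b) ⊔ LinearMap.ker B := by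
      rw [← span_R_eq_top hR]
      rw [Submodule.span_le]
      intro x hx
      rcases eq_or_ne (B x x) 0 with h0 | h0
      · exact Submodule.mem_sup_right
          (mem_ker_of_rad (rad_of_isotropic hR.symm hR.posSemidef h0))
      · rcases (hsub ⟨hx, h0⟩).2 with hc | hc
        · have : x = b + (x - b) := by abel
          rw [this]
          exact add_mem (Submodule.mem_sup_left (Submodule.mem_span_singleton_self b))
            (Submodule.mem_sup_right (mem_ker_of_rad hc))
        · have : x = -b + (x + b) := by abel
          rw [this]
          exact add_mem (Submodule.mem_sup_left (neg_mem (Submodule.mem_span_singleton_self b)))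
            (Submodule.mem_sup_right (mem_ker_of_rad hc))
    have hbne : b ≠ 0 := fun h => hb.2 (by rw [h]; simp)
    have htop : (ℝ ∙ b) ⊔ LinearMap.ker B = ⊤ := top_le_iff.mp hWb
    have hfr := Submodule.finrank_sup_add_finrank_inf_eq (ℝ ∙ b) (LinearMap.ker B)
    rw [htop] at hfr
    have h1 : Module.finrank ℝ (ℝ ∙ b) = 1 := finrank_span_singleton hbne
    rw [h1, finrank_top] at hfr
    have : Module.finrank ℝ V ≤ 1 + Module.finrank ℝ (LinearMap.ker B) := by omega
    have hrk : rank B ≤ 1 := by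
      unfold rank nullity
      omega
    omega
  -- connectedness gives a cross pairing
  have hconn := hR.conn
  unfold IsConnSet at hconn
  have hcross : ∃ x ∈ P₁, ∃ y ∈ P₂, B x y ≠ 0 := by
    by_contra hc
    push_neg at hc
    exact hconn ⟨P₁, P₂, ⟨b, hbP₁⟩, hP₂ne, Set.union_diff_cancel hP₁sub,
      by rw [Set.inter_diff_self], hc⟩
  obtain ⟨x, hx, y, hy, hxy⟩ := hcross
  have hyb : B y b ≠ 0 := by
    have hxyy : B x y ≠ 0 := hxy
    rcases hx.2 with hc | hc
    · have : B x y = B (x - b) y + B b y := by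
        rw [map_sub, LinearMap.sub_apply]; ring
      rw [hc y, zero_add] at this
      rw [this] at hxyy
      rw [hR.symm y b]
      exact hxyy
    · have : B x y = B (x + b) y - B b y := by
        rw [map_add, LinearMap.add_apply]; ring
      rw [hc y, zero_sub] at this
      rw [this] at hxyy
      rw [hR.symm y b]
      exact fun h => hxyy (by rw [h, neg_zero])
  have hyn : y ∈ nonIso B R := hy.1
  rcases pairing_classify hR hsl hb hyn with h | h | h | h | h
  · exact absurd h hyb
  · exact ⟨y, hyn, h⟩
  · refine ⟨-y, neg_mem_nonIso hR hyn, ?_⟩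
    rw [map_neg, LinearMap.neg_apply]
    linarith
  · exact absurd (⟨hyn, Or.inl h.2⟩ : y ∈ P₁) hy.2
  · exact absurd (⟨hyn, Or.inr h.2⟩ : y ∈ P₁) hy.2

end Aux5
section Aux6

variable {V : Type*} [AddCommGroup V] [Module ℝ V]
variable {B : LinearMap.BilinForm ℝ V} {R Q : Set V}

/-- L1T: any nonisotropic root pairs to `1` with some element of the orbit `W_Q ⬝ Q`,
provided `⟨Q⟩ = ⟨R⟩`. -/
theorem exists_pairing_one_orbit [FiniteDimensional ℝ V] (hR : IsEARS B R)
    (hsl : IsSimplyLaced B R) (hrank : 1 < rank B) (hQ : Q ⊆ nonIso B R)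
    (hgen : AddSubgroup.closure Q = AddSubgroup.closure R) {b : V} (hb : b ∈ nonIso B R) :
    ∃ z ∈ reflOrbit B Q, 2 * B z b = B b b := by
  by_contra hno
  push_neg at hno
  -- every orbit element pairs in `(B b b) ℤ` with `b`
  have hint : ∀ z ∈ reflOrbit B Q, ∃ m : ℤ, B z b = m * B b b := by
    intro z hz
    have hzn : z ∈ nonIso B R := orbit_subset_nonIso hR hQ hz
    rcases pairing_classify hR hsl hb hzn with h | h | h | h | h
    · exact ⟨0, by rw [h]; push_cast; ring⟩
    · exact absurd h (hno z hz)
    · have hzneg : -z ∈ reflOrbit B Q := orbit_neg hQ hz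
      have : 2 * B (-z) b = B b b := by
        rw [map_neg, LinearMap.neg_apply]; linarith
      exact absurd this (hno (-z) hzneg)
    · exact ⟨1, by rw [h.1]; push_cast; ring⟩
    · exact ⟨-1, by rw [h.1]; push_cast; ring⟩
  -- the set of such vectors is an additive subgroup
  let E : AddSubgroup V :=
    { carrier := {x | ∃ m : ℤ, B x b = m * B b b}
      add_mem' := by
        rintro x y ⟨m, hm⟩ ⟨m', hm'⟩
        refine ⟨m + m', ?_⟩
        rw [map_add, LinearMap.add_apply, hm, hm']
        push_cast; ring
      zero_mem' := ⟨0, by simp⟩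
      neg_mem' := by
        rintro x ⟨m, hm⟩
        refine ⟨-m, ?_⟩
        rw [map_neg, LinearMap.neg_apply, hm]
        push_cast; ring }
  have hTE : AddSubgroup.closure R ≤ E := by
    rw [← hgen]
    refine AddSubgroup.closure_le E |>.mpr ?_
    intro q hq
    exact hint q (mem_orbit_of_mem hq)
  obtain ⟨z, hzn, hz1⟩ := exists_pairing_one hR hsl hrank hb
  obtain ⟨m, hm⟩ := hTE (AddSubgroup.subset_closure hzn.1)
  have hbb : B b b ≠ 0 := hb.2
  have h2m : (2 * m : ℝ) = 1 := by
    have : 2 * ((m : ℝ) * B b b) = B b b := by rw [← hm]; exact hz1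
    have h := mul_right_cancel₀ hbb (by linarith : (2 * (m:ℝ)) * B b b = 1 * B b b)
    linarith [h]
  have : ((2 * m : ℤ) : ℝ) = ((1 : ℤ) : ℝ) := by push_cast; linarith
  have := Int.cast_injective this
  omega

end Aux6
section Aux7

variable {V : Type*} [AddCommGroup V] [Module ℝ V]
variable {B : LinearMap.BilinForm ℝ V} {R Q : Set V}

/-- One-step translation: if `a` and `a + δ` are nonisotropic roots (`δ` in the radical)
and `η` pairs to `±1` with `a`, then `η + δ` is a nonisotropic root. -/
theorem step_translate (hR : IsEARS B R) (hsl : IsSimplyLaced B R) {δ a η : V}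
    (hδ : ∀ y, B δ y = 0) (ha : a ∈ nonIso B R) (haδ : a + δ ∈ nonIso B R)
    (hη : η ∈ nonIso B R) (hc : 2 * B η a = B a a ∨ 2 * B η a = -B a a) :
    η + δ ∈ nonIso B R := by
  have hδ' : ∀ y, B y δ = 0 := fun y => by rw [hR.symm]; exact hδ y
  have hk : B a a ≠ 0 := ha.2
  have hkδ : B (a + δ) (a + δ) = B a a := by
    rw [B_expand_add]
    rw [hδ δ, hδ a, hδ' a]
    ring
  have hkδ0 : B (a + δ) (a + δ) ≠ 0 := by rw [hkδ]; exact hk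
  rcases hc with hc | hc
  · have h1 : reflMap B a η = η - a := reflMap_eq_sub hk hc
    have m1 : η - a ∈ nonIso B R := by
      have := reflMap_mem_nonIso hR ha hη
      rwa [h1] at this
    have p2 : 2 * B (η - a) (a + δ) = -B (a + δ) (a + δ) := by
      rw [hkδ]
      simp only [map_add, map_sub, LinearMap.add_apply, LinearMap.sub_apply]
      rw [hδ' η, hδ' a]
      linarith
    have h2 : reflMap B (a + δ) (η - a) = η - a + (a + δ) := reflMap_eq_add hkδ0 p2
    have m2 : η - a + (a + δ) ∈ nonIso B R := by
      have := reflMap_mem_nonIso hR haδ m1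
      rwa [h2] at this
    have he : η + δ = η - a + (a + δ) := by abel
    rwa [he]
  · have p1 : 2 * B η (a + δ) = -B (a + δ) (a + δ) := by
      rw [hkδ]
      simp only [map_add, LinearMap.add_apply]
      rw [hδ' η]
      linarith
    have h1 : reflMap B (a + δ) η = η + (a + δ) := reflMap_eq_add hkδ0 p1
    have m1 : η + (a + δ) ∈ nonIso B R := by
      have := reflMap_mem_nonIso hR haδ hη
      rwa [h1] at this
    have p2 : 2 * B (η + (a + δ)) a = B a a := by
      simp only [map_add, LinearMap.add_apply]
      rw [hδ a]
      linarith
    have h2 : reflMap B a (η + (a + δ)) = η + (a + δ) - a := reflMap_eq_sub hk p2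
    have m2 : η + (a + δ) - a ∈ nonIso B R := by
      have := reflMap_mem_nonIso hR ha m1
      rwa [h2] at this
    have he : η + δ = η + (a + δ) - a := by abel
    rwa [he]

/-- Translation across a radical-equivalence class, using a pivot from L1. -/
theorem class_translate [FiniteDimensional ℝ V] (hR : IsEARS B R)
    (hsl : IsSimplyLaced B R) (hrank : 1 < rank B) {δ a η : V}
    (hδ : ∀ y, B δ y = 0) (ha : a ∈ nonIso B R) (haδ : a + δ ∈ nonIso B R)
    (hη : η ∈ nonIso B R)
    (hcls : (∀ y, B (η - a) y = 0) ∨ (∀ y, B (η + a) y = 0)) :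
    η + δ ∈ nonIso B R := by
  obtain ⟨ζ, hζ, hζ1⟩ := exists_pairing_one hR hsl hrank ha
  have hζζ : B ζ ζ = B a a := hsl ζ hζ a ha
  have hζa : 2 * B a ζ = B ζ ζ := by
    rw [hζζ, hR.symm a ζ]
    exact hζ1
  -- (i) ζ + δ is a nonisotropic root
  have hi : ζ + δ ∈ nonIso B R :=
    step_translate hR hsl hδ ha haδ hζ (Or.inl hζ1)
  rcases hcls with hρ | hρ
  · -- η = a + ρ with ρ radical
    set ρ : V := η - a with hρdef
    have haρ : a + ρ ∈ nonIso B R := by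
      have : a + ρ = η := by rw [hρdef]; abel
      rwa [this]
    -- (iii) ζ + ρ nonisotropic
    have hiii : ζ + ρ ∈ nonIso B R :=
      step_translate hR hsl hρ ha haρ hζ (Or.inl hζ1)
    -- (iv) (a + δ) + ρ = η + δ nonisotropic
    have hp : 2 * B (a + δ) ζ = B ζ ζ := by
      simp only [map_add, LinearMap.add_apply]
      rw [hδ ζ]
      linarith
    have hiv : (a + δ) + ρ ∈ nonIso B R :=
      step_translate hR hsl hρ hζ hiii haδ (Or.inl hp)
    have : η + δ = (a + δ) + ρ := by rw [hρdef]; abel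
    rwa [this]
  · -- η = -a + ρ with ρ radical
    set ρ : V := η + a with hρdef
    have hna : -a ∈ nonIso B R := neg_mem_nonIso hR ha
    have hnaρ : -a + ρ ∈ nonIso B R := by
      have : -a + ρ = η := by rw [hρdef]; abel
      rwa [this]
    -- (ii) -a + δ nonisotropic via pivot pair (ζ, ζ + δ)
    have hpna : 2 * B (-a) ζ = -B ζ ζ := by
      rw [map_neg, LinearMap.neg_apply]
      linarith
    have hii : -a + δ ∈ nonIso B R :=
      step_translate hR hsl hδ hζ hi hna (Or.inr hpna)
    -- (iii) ζ + ρ nonisotropic via pair (-a, -a + ρ)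
    have hnn : B (-a) (-a) = B ζ ζ := by
      simp only [map_neg, LinearMap.neg_apply, neg_neg]
      rw [hζζ]
    have hpζ : 2 * B ζ (-a) = -B (-a) (-a) := by
      rw [hnn]
      simp only [map_neg]
      rw [hζζ]
      linarith
    have hiii : ζ + ρ ∈ nonIso B R :=
      step_translate hR hsl hρ hna hnaρ hζ (Or.inr hpζ)
    -- (iv) (-a + δ) + ρ = η + δ
    have hp4 : 2 * B (-a + δ) ζ = -B ζ ζ := by
      simp only [map_add, LinearMap.add_apply]
      rw [hδ ζ]
      linarith
    have hiv : (-a + δ) + ρ ∈ nonIso B R :=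
      step_translate hR hsl hρ hζ hiii hii (Or.inr hp4)
    have : η + δ = (-a + δ) + ρ := by rw [hρdef]; abel
    rwa [this]

end Aux7
section Aux8

variable {V : Type*} [AddCommGroup V] [Module ℝ V]
variable {B : LinearMap.BilinForm ℝ V} {R Q : Set V}

/-- L2: if some nonisotropic root translates by a radical `δ` to a nonisotropic root,
then all of them do. -/
theorem translate_nonIso [FiniteDimensional ℝ V] (hR : IsEARS B R)
    (hsl : IsSimplyLaced B R) (hrank : 1 < rank B) {δ : V}
    (hδ : ∀ y, B δ y = 0) (h0 : ∃ γ, γ ∈ nonIso B R ∧ γ + δ ∈ nonIso B R) :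
    ∀ α ∈ nonIso B R, α + δ ∈ nonIso B R := by
  classical
  obtain ⟨γ₀, hγ₀, hγ₀δ⟩ := h0
  set A : Set V := {α ∈ nonIso B R | α + δ ∈ nonIso B R} with hAdef
  have hAsub : A ⊆ nonIso B R := fun x hx => hx.1
  have hstep : ∀ x ∈ A, ∀ y ∈ nonIso B R, B x y ≠ 0 → y ∈ A := by
    intro x hx y hy hxy
    refine ⟨hy, ?_⟩
    have hyx : B y x ≠ 0 := by rw [hR.symm y x]; exact hxy
    rcases pairing_classify hR hsl hx.1 hy with h | h | h | h | h
    · exact absurd h hyx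
    · exact step_translate hR hsl hδ hx.1 hx.2 hy (Or.inl h)
    · exact step_translate hR hsl hδ hx.1 hx.2 hy (Or.inr h)
    · exact class_translate hR hsl hrank hδ hx.1 hx.2 hy (Or.inl h.2)
    · exact class_translate hR hsl hrank hδ hx.1 hx.2 hy (Or.inr h.2)
  intro α hα
  by_contra hαA
  have hαnotA : α ∉ A := fun h => hαA h.2
  have hconn := hR.conn
  unfold IsConnSet at hconn
  refine hconn ⟨A, nonIso B R \ A, ⟨γ₀, hγ₀, hγ₀δ⟩, ⟨α, hα, hαnotA⟩,
    Set.union_diff_cancel hAsub, by rw [Set.inter_diff_self], ?_⟩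
  intro x hx y hy
  by_contra hxy
  exact hy.2 (hstep x hx y hy.1 hxy)

end Aux8
section Aux9

variable {V : Type*} [AddCommGroup V] [Module ℝ V]
variable {B : LinearMap.BilinForm ℝ V} {R Q : Set V}

theorem B_orth_closure_right {x : V} {S : Set V} (h : ∀ y ∈ S, B x y = 0) :
    ∀ y ∈ AddSubgroup.closure S, B x y = 0 := by
  intro y hy
  refine AddSubgroup.closure_induction (p := fun z _ => B x z = 0) h (by simp) ?_ ?_ hy
  · intro a b _ _ ha hb
    rw [map_add, ha, hb, add_zero]
  · intro a _ ha
    rw [map_neg, ha, neg_zero]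

theorem B_orth_closure_left {x : V} {S : Set V} (h : ∀ y ∈ S, B y x = 0) :
    ∀ y ∈ AddSubgroup.closure S, B y x = 0 := by
  intro y hy
  refine AddSubgroup.closure_induction (p := fun z _ => B z x = 0) h (by simp) ?_ ?_ hy
  · intro a b _ _ ha hb
    rw [map_add, LinearMap.add_apply, ha, hb, add_zero]
  · intro a _ ha
    rw [map_neg, LinearMap.neg_apply, ha, neg_zero]

theorem pair_int_closure_left {S : Set V} {c : V} {k : ℝ}
    (h : ∀ y ∈ S, ∃ m : ℤ, 2 * B y c = m * k) :
    ∀ y ∈ AddSubgroup.closure S, ∃ m : ℤ, 2 * B y c = m * k := by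
  intro y hy
  refine AddSubgroup.closure_induction (p := fun z _ => ∃ m : ℤ, 2 * B z c = m * k)
    h ⟨0, by simp⟩ ?_ ?_ hy
  · rintro a b _ _ ⟨m, hm⟩ ⟨m', hm'⟩
    refine ⟨m + m', ?_⟩
    rw [map_add, LinearMap.add_apply]
    push_cast
    linarith
  · rintro a _ ⟨m, hm⟩
    refine ⟨-m, ?_⟩
    rw [map_neg, LinearMap.neg_apply]
    push_cast
    linarith

theorem pair_int_closure₂ (hsym : ∀ x y : V, B x y = B y x) {S : Set V} {k : ℝ}
    (h : ∀ x ∈ S, ∀ y ∈ S, ∃ m : ℤ, 2 * B x y = m * k) :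
    ∀ x ∈ AddSubgroup.closure S, ∀ y ∈ AddSubgroup.closure S, ∃ m : ℤ, 2 * B x y = m * k := by
  intro x hx y hy
  have hx' : ∀ c ∈ S, ∃ m : ℤ, 2 * B x c = m * k := by
    intro c hc
    refine pair_int_closure_left (c := c) ?_ x hx
    intro y' hy'
    exact h y' hy' c hc
  -- now do closure induction on y
  refine AddSubgroup.closure_induction (p := fun z _ => ∃ m : ℤ, 2 * B x z = m * k)
    ?_ ⟨0, by simp⟩ ?_ ?_ hy
  · intro c hc
    exact hx' c hc
  · rintro a b _ _ ⟨m, hm⟩ ⟨m', hm'⟩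
    refine ⟨m + m', ?_⟩
    rw [map_add]
    push_cast
    linarith
  · rintro a _ ⟨m, hm⟩
    refine ⟨-m, ?_⟩
    rw [map_neg]
    push_cast
    linarith

theorem norm_int_closure (hsym : ∀ x y : V, B x y = B y x) {S : Set V} {k : ℝ}
    (hd : ∀ x ∈ S, B x x = k)
    (hoff : ∀ x ∈ S, ∀ y ∈ S, ∃ m : ℤ, 2 * B x y = m * k) :
    ∀ x ∈ AddSubgroup.closure S, ∃ m : ℤ, B x x = m * k := by
  intro x hx
  refine AddSubgroup.closure_induction (p := fun z _ => ∃ m : ℤ, B z z = m * k)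
    ?_ ⟨0, by simp⟩ ?_ ?_ hx
  · intro c hc
    exact ⟨1, by rw [hd c hc]; push_cast; ring⟩
  · rintro a b hac hbc ⟨m, hm⟩ ⟨m', hm'⟩
    obtain ⟨m'', hm''⟩ := pair_int_closure₂ hsym hoff a hac b hbc
    refine ⟨m + m' + m'', ?_⟩
    rw [B_expand_add, hsym b a]
    push_cast
    linarith
  · rintro a _ ⟨m, hm⟩
    refine ⟨m, ?_⟩
    simp only [map_neg, LinearMap.neg_apply, neg_neg]
    exact hm

/-- ORTH: a generating subset of `R^×` cannot split into two nonempty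
mutually orthogonal parts. -/
theorem no_orth_split (hR : IsEARS B R) (hsl : IsSimplyLaced B R) {Q₁ Q₂ : Set V}
    (hQ1 : Q₁ ⊆ nonIso B R) (hQ2 : Q₂ ⊆ nonIso B R)
    (hgen : AddSubgroup.closure (Q₁ ∪ Q₂) = AddSubgroup.closure R)
    (horth : ∀ x ∈ Q₁, ∀ y ∈ Q₂, B x y = 0)
    (h1 : Q₁.Nonempty) (h2 : Q₂.Nonempty) : False := by
  classical
  obtain ⟨q₂, hq₂⟩ := h2
  obtain ⟨q₁, hq₁⟩ := h1
  set k : ℝ := B q₂ q₂ with hkdef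
  have hk : 0 < k := norm_pos hR (hQ2 hq₂)
  set G₁ := AddSubgroup.closure Q₁ with hG₁
  set G₂ := AddSubgroup.closure Q₂ with hG₂
  -- orthogonality of the generated subgroups
  have hGG : ∀ y ∈ G₁, ∀ z ∈ G₂, B y z = 0 := by
    intro y hy z hz
    have h1 : ∀ w ∈ Q₁, B w z = 0 := fun w hw =>
      B_orth_closure_right (horth w hw) z hz
    exact B_orth_closure_left h1 y hy
  -- integrality of norms on each part
  have hd1 : ∀ x ∈ Q₁, B x x = k := fun x hx => hsl x (hQ1 hx) q₂ (hQ2 hq₂)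
  have hd2 : ∀ x ∈ Q₂, B x x = k := fun x hx => hsl x (hQ2 hx) q₂ (hQ2 hq₂)
  have hoff : ∀ (P : Set V), P ⊆ nonIso B R → (∀ x ∈ P, B x x = k) →
      ∀ x ∈ P, ∀ y ∈ P, ∃ m : ℤ, 2 * B x y = m * k := by
    intro P hP hdk x hx y hy
    obtain ⟨n, hn⟩ := hR.integrality y (hP hy) x (hP hx)
    refine ⟨n, ?_⟩
    have hkxy : B y y = k := hdk y hy
    have h0 : B y y ≠ 0 := (hP hy).2
    rw [div_eq_iff h0] at hn
    rw [hkxy] at hn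
    linarith
  have hn1 := norm_int_closure hR.symm hd1 (hoff Q₁ hQ1 hd1)
  have hn2 := norm_int_closure hR.symm hd2 (hoff Q₂ hQ2 hd2)
  -- decomposition of each nonisotropic root, with one radical component
  have hdec : ∀ α ∈ nonIso B R, ∃ x₁, x₁ ∈ G₁ ∧ ∃ x₂, x₂ ∈ G₂ ∧ x₁ + x₂ = α ∧
      ((∀ w, B x₁ w = 0) ∨ (∀ w, B x₂ w = 0)) := by
    intro α hα
    have hαcl : α ∈ AddSubgroup.closure (Q₁ ∪ Q₂) := by
      rw [hgen]
      exact AddSubgroup.subset_closure hα.1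
    rw [AddSubgroup.closure_union] at hαcl
    obtain ⟨y, hy, z, hz, hyz⟩ := AddSubgroup.mem_sup.mp hαcl
    obtain ⟨m₁, hm₁⟩ := hn1 y hy
    obtain ⟨m₂, hm₂⟩ := hn2 z hz
    have hcross : B y z = 0 := hGG y hy z hz
    have hcross' : B z y = 0 := by rw [hR.symm]; exact hcross
    have hαk : B α α = k := hsl α hα q₂ (hQ2 hq₂)
    have hsum : B α α = B y y + B z z := by
      rw [← hyz, B_expand_add, hcross, hcross']
      ring
    rw [hαk] at hsum
    have hsum' : (m₁ : ℝ) * k + (m₂ : ℝ) * k = k := by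
      rw [← hm₁, ← hm₂]
      linarith
    have hmsum : ((m₁ + m₂ : ℤ) : ℝ) * k = 1 * k := by
      push_cast
      linarith [hsum']
    have hms : m₁ + m₂ = 1 := by
      have := mul_right_cancel₀ (ne_of_gt hk) hmsum
      exact_mod_cast this
    have hm₁0 : 0 ≤ m₁ := by
      have h0 : 0 ≤ (m₁ : ℝ) * k := hm₁ ▸ hR.posSemidef y
      by_contra hneg
      push_neg at hneg
      have hc : (m₁ : ℝ) < 0 := by exact_mod_cast hneg
      nlinarith
    have hm₂0 : 0 ≤ m₂ := by
      have h0 : 0 ≤ (m₂ : ℝ) * k := hm₂ ▸ hR.posSemidef z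
      by_contra hneg
      push_neg at hneg
      have hc : (m₂ : ℝ) < 0 := by exact_mod_cast hneg
      nlinarith
    refine ⟨y, hy, z, hz, hyz, ?_⟩
    have hcase : m₁ = 0 ∨ m₂ = 0 := by omega
    rcases hcase with h | h
    · exact Or.inl (rad_of_isotropic hR.symm hR.posSemidef
        (by rw [hm₁, h]; push_cast; ring))
    · exact Or.inr (rad_of_isotropic hR.symm hR.posSemidef
        (by rw [hm₂, h]; push_cast; ring))
  -- the disconnection of `R^×`
  set P₁ : Set V := {α ∈ nonIso B R | ∀ u ∈ G₂, B α u = 0} with hP₁def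
  set P₂ : Set V := nonIso B R \ P₁ with hP₂def
  have hq1P : q₁ ∈ P₁ :=
    ⟨hQ1 hq₁, fun u hu => hGG q₁ (AddSubgroup.subset_closure hq₁) u hu⟩
  have hq2P : q₂ ∈ P₂ := by
    refine ⟨hQ2 hq₂, fun hmem => ?_⟩
    exact (hQ2 hq₂).2 (hmem.2 q₂ (AddSubgroup.subset_closure hq₂))
  have hP₂G₁ : ∀ α ∈ P₂, ∀ u ∈ G₁, B α u = 0 := by
    rintro α ⟨hα, hαn⟩ u hu
    obtain ⟨x₁, h1, x₂, h2, heq, hor⟩ := hdec α hα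
    rcases hor with hrad | hrad
    · rw [← heq, map_add, LinearMap.add_apply, hrad u]
      have : B x₂ u = 0 := by
        rw [hR.symm]
        exact B_orth_closure_right (fun w hw => hGG u hu w (AddSubgroup.subset_closure hw)) x₂ h2
      rw [this]
      ring
    · exfalso
      apply hαn
      refine ⟨hα, fun v hv => ?_⟩
      rw [← heq, map_add, LinearMap.add_apply, hrad v, hGG x₁ h1 v hv]
      ring
  have horthP : ∀ x ∈ P₁, ∀ y' ∈ P₂, B x y' = 0 := by
    intro x hx y' hy'
    obtain ⟨x₁, h1, x₂, h2, heq, hor⟩ := hdec x hx.1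
    rcases hor with hrad | hrad
    · -- x₁ radical
      obtain ⟨y₁, g1, y₂, g2, geq, _⟩ := hdec y' hy'.1
      have e1 : B x y₂ = 0 := hx.2 y₂ g2
      have e2 : B y₁ x₁ = 0 := by rw [hR.symm]; exact hrad y₁
      have e3 : B y₁ x₂ = 0 := hGG y₁ g1 x₂ h2
      have e4 : B x y₁ = 0 := by
        rw [hR.symm, ← heq, map_add, e2, e3]
        ring
      rw [← geq, map_add, e4, e1]
      ring
    · -- x₂ radical
      have e1 : B y' x₁ = 0 := hP₂G₁ y' hy' x₁ h1
      have e2 : B y' x₂ = 0 := by rw [hR.symm]; exact hrad y'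
      rw [hR.symm, ← heq, map_add, e1, e2]
      ring
  have hconn := hR.conn
  unfold IsConnSet at hconn
  exact hconn ⟨P₁, P₂, ⟨q₁, hq1P⟩, ⟨q₂, hq2P⟩,
    Set.union_diff_cancel (fun x hx => hx.1), by rw [Set.inter_diff_self], horthP⟩

end Aux9
section Aux10

variable {V : Type*} [AddCommGroup V] [Module ℝ V]
variable {B : LinearMap.BilinForm ℝ V} {R Q : Set V}

/-- Half-pair step: if `β, β + δ'` are both in the orbit and `γ` in the orbit pairs
to `±1` with `β`, then `γ ± δ'` are both in the orbit. -/
theorem halfpair_step (hR : IsEARS B R) (hQ : Q ⊆ nonIso B R) {δ' β γ : V}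
    (hδ' : ∀ y, B δ' y = 0) (hβ : β ∈ reflOrbit B Q) (hβδ : β + δ' ∈ reflOrbit B Q)
    (hγ : γ ∈ reflOrbit B Q) (hc : 2 * B γ β = B β β ∨ 2 * B γ β = -B β β) :
    γ + δ' ∈ reflOrbit B Q ∧ γ - δ' ∈ reflOrbit B Q := by
  have hδ'' : ∀ y, B y δ' = 0 := fun y => by rw [hR.symm]; exact hδ' y
  have hβn : β ∈ nonIso B R := orbit_subset_nonIso hR hQ hβ
  have hk : B β β ≠ 0 := hβn.2
  have hkδ : B (β + δ') (β + δ') = B β β := by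
    rw [B_expand_add, hδ' δ', hδ' β, hδ'' β]
    ring
  have hkδ0 : B (β + δ') (β + δ') ≠ 0 := by rw [hkδ]; exact hk
  rcases hc with hc | hc
  · constructor
    · have s1 : reflMap B β γ = γ - β := reflMap_eq_sub hk hc
      have m1 : γ - β ∈ reflOrbit B Q := by
        have := orbit_reflMap hR hQ hβ hγ
        rwa [s1] at this
      have p2 : 2 * B (γ - β) (β + δ') = -B (β + δ') (β + δ') := by
        rw [hkδ]
        simp only [map_add, map_sub, LinearMap.add_apply, LinearMap.sub_apply]
        rw [hδ'' γ, hδ'' β]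
        linarith
      have s2 : reflMap B (β + δ') (γ - β) = γ - β + (β + δ') := reflMap_eq_add hkδ0 p2
      have m2 : γ - β + (β + δ') ∈ reflOrbit B Q := by
        have := orbit_reflMap hR hQ hβδ m1
        rwa [s2] at this
      have he : γ + δ' = γ - β + (β + δ') := by abel
      rwa [he]
    · have t1 : 2 * B γ (β + δ') = B (β + δ') (β + δ') := by
        rw [hkδ]
        simp only [map_add]
        rw [hδ'' γ]
        linarith
      have s1 : reflMap B (β + δ') γ = γ - (β + δ') := reflMap_eq_sub hkδ0 t1
      have m1 : γ - (β + δ') ∈ reflOrbit B Q := by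
        have := orbit_reflMap hR hQ hβδ hγ
        rwa [s1] at this
      have t2 : 2 * B (γ - (β + δ')) β = -B β β := by
        simp only [map_add, map_sub, LinearMap.add_apply, LinearMap.sub_apply]
        rw [hδ' β]
        linarith
      have s2 : reflMap B β (γ - (β + δ')) = γ - (β + δ') + β := reflMap_eq_add hk t2
      have m2 : γ - (β + δ') + β ∈ reflOrbit B Q := by
        have := orbit_reflMap hR hQ hβ m1
        rwa [s2] at this
      have he : γ - δ' = γ - (β + δ') + β := by abel
      rwa [he]
  · constructor
    · have t1 : 2 * B γ (β + δ') = -B (β + δ') (β + δ') := by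
        rw [hkδ]
        simp only [map_add]
        rw [hδ'' γ]
        linarith
      have s1 : reflMap B (β + δ') γ = γ + (β + δ') := reflMap_eq_add hkδ0 t1
      have m1 : γ + (β + δ') ∈ reflOrbit B Q := by
        have := orbit_reflMap hR hQ hβδ hγ
        rwa [s1] at this
      have t2 : 2 * B (γ + (β + δ')) β = B β β := by
        simp only [map_add, LinearMap.add_apply]
        rw [hδ' β]
        linarith
      have s2 : reflMap B β (γ + (β + δ')) = γ + (β + δ') - β := reflMap_eq_sub hk t2
      have m2 : γ + (β + δ') - β ∈ reflOrbit B Q := by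
        have := orbit_reflMap hR hQ hβ m1
        rwa [s2] at this
      have he : γ + δ' = γ + (β + δ') - β := by abel
      rwa [he]
    · have s1 : reflMap B β γ = γ + β := reflMap_eq_add hk hc
      have m1 : γ + β ∈ reflOrbit B Q := by
        have := orbit_reflMap hR hQ hβ hγ
        rwa [s1] at this
      have p2 : 2 * B (γ + β) (β + δ') = B (β + δ') (β + δ') := by
        rw [hkδ]
        simp only [map_add, LinearMap.add_apply]
        rw [hδ'' γ, hδ'' β]
        linarith
      have s2 : reflMap B (β + δ') (γ + β) = γ + β - (β + δ') := reflMap_eq_sub hkδ0 p2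
      have m2 : γ + β - (β + δ') ∈ reflOrbit B Q := by
        have := orbit_reflMap hR hQ hβδ m1
        rwa [s2] at this
      have he : γ - δ' = γ + β - (β + δ') := by abel
      rwa [he]

end Aux10
section Aux11

variable {V : Type*} [AddCommGroup V] [Module ℝ V]
variable {B : LinearMap.BilinForm ℝ V} {R Q : Set V}

/-- Claim C: if one orbit element translates by the radical vector `δ` inside the orbit,
then every orbit element does (in both directions). -/
theorem translate_orbit [FiniteDimensional ℝ V] (hR : IsEARS B R)
    (hsl : IsSimplyLaced B R) (hrank : 1 < rank B) (hQ : Q ⊆ nonIso B R)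
    (hgen : AddSubgroup.closure Q = AddSubgroup.closure R) {δ β₀ : V}
    (hδ : ∀ y, B δ y = 0) (hβ₀ : β₀ ∈ reflOrbit B Q) (hβ₀δ : β₀ + δ ∈ reflOrbit B Q) :
    ∀ γ ∈ reflOrbit B Q, γ + δ ∈ reflOrbit B Q ∧ γ - δ ∈ reflOrbit B Q := by
  classical
  have hTn : reflOrbit B Q ⊆ nonIso B R := orbit_subset_nonIso hR hQ
  set U : Set V := {γ | γ ∈ reflOrbit B Q ∧ γ + δ ∈ reflOrbit B Q ∧ γ - δ ∈ reflOrbit B Q}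
    with hUdef
  -- neighbor propagation inside the orbit
  have hUstep : ∀ γ ∈ U, ∀ γ' ∈ reflOrbit B Q, B γ' γ ≠ 0 → γ' ∈ U := by
    intro γ hγ γ' hγ' hne
    have hγT := hγ.1
    have hγn := hTn hγT
    have hγ'n := hTn hγ'
    rcases pairing_classify hR hsl hγn hγ'n with h | h | h | h | h
    · exact absurd h hne
    · exact ⟨hγ', halfpair_step hR hQ hδ hγT hγ.2.1 hγ' (Or.inl h)⟩
    · exact ⟨hγ', halfpair_step hR hQ hδ hγT hγ.2.1 hγ' (Or.inr h)⟩
    · -- γ' - γ radical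
      obtain ⟨ζ, hζT, hζp⟩ := exists_pairing_one_orbit hR hsl hrank hQ hgen hγn
      have hζU : ζ ∈ U := ⟨hζT, halfpair_step hR hQ hδ hγT hγ.2.1 hζT (Or.inl hζp)⟩
      have hζn := hTn hζT
      have hζζ : B ζ ζ = B γ γ := hsl ζ hζn γ hγn
      have hp : 2 * B γ' ζ = B ζ ζ := by
        have hrad : B (γ' - γ) ζ = 0 := h.2 ζ
        have hexp : B (γ' - γ) ζ = B γ' ζ - B γ ζ := by
          rw [map_sub, LinearMap.sub_apply]
        have hγζ : B γ ζ = B ζ γ := hR.symm γ ζ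
        rw [hζζ]
        have : B γ' ζ = B γ ζ := by linarith [hexp, hrad]
        rw [this, hγζ]
        linarith [hζp]
      exact ⟨hγ', halfpair_step hR hQ hδ hζU.1 hζU.2.1 hγ' (Or.inl hp)⟩
    · -- γ' + γ radical
      obtain ⟨ζ, hζT, hζp⟩ := exists_pairing_one_orbit hR hsl hrank hQ hgen hγn
      have hζU : ζ ∈ U := ⟨hζT, halfpair_step hR hQ hδ hγT hγ.2.1 hζT (Or.inl hζp)⟩
      have hζn := hTn hζT
      have hζζ : B ζ ζ = B γ γ := hsl ζ hζn γ hγn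
      have hp : 2 * B γ' ζ = -B ζ ζ := by
        have hrad : B (γ' + γ) ζ = 0 := h.2 ζ
        have hexp : B (γ' + γ) ζ = B γ' ζ + B γ ζ := by
          rw [map_add, LinearMap.add_apply]
        have hγζ : B γ ζ = B ζ γ := hR.symm γ ζ
        rw [hζζ]
        have : B γ' ζ = -B γ ζ := by linarith [hexp, hrad]
        rw [this, hγζ]
        linarith [hζp]
      exact ⟨hγ', halfpair_step hR hQ hδ hζU.1 hζU.2.1 hγ' (Or.inr hp)⟩
  -- β₀ belongs to U
  have hβ₀U : β₀ ∈ U := by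
    have hβ₀n := hTn hβ₀
    obtain ⟨ζ, hζT, hζp⟩ := exists_pairing_one_orbit hR hsl hrank hQ hgen hβ₀n
    have hζU : ζ ∈ U := ⟨hζT, halfpair_step hR hQ hδ hβ₀ hβ₀δ hζT (Or.inl hζp)⟩
    have hne : B β₀ ζ ≠ 0 := by
      rw [hR.symm β₀ ζ]
      intro h0
      rw [h0] at hζp
      exact hβ₀n.2 (by linarith)
    exact hUstep ζ hζU β₀ hβ₀ hne
  -- U is stable under the Weyl group of Q
  have hgenstab : ∀ q ∈ Q, ∀ γ ∈ U, reflMap B q γ ∈ U := by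
    intro q hq γ hγ
    rcases eq_or_ne (B γ q) 0 with h0 | h0
    · rwa [reflMap_of_orth h0]
    · have hqT : q ∈ reflOrbit B Q := mem_orbit_of_mem hq
      have hqU : q ∈ U := hUstep γ hγ q hqT (by rw [hR.symm q γ]; exact h0)
      have hmT : reflMap B q γ ∈ reflOrbit B Q := orbit_reflMap hR hQ hqT hγ.1
      have hpq : B (reflMap B q γ) q = -B γ q := by
        rw [reflMap_apply]
        simp only [map_sub, map_smul, LinearMap.sub_apply, LinearMap.smul_apply, smul_eq_mul]
        have hk : B q q ≠ 0 := (hQ hq).2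
        field_simp
        ring
      exact hUstep q hqU (reflMap B q γ) hmT (by rw [hpq]; simpa using h0)
  have hWstab : ∀ w ∈ weylOn B Q, (∀ γ ∈ U, w γ ∈ U) ∧ (∀ γ ∈ U, w⁻¹ γ ∈ U) := by
    intro w hw
    refine Subgroup.closure_induction (k := reflEquiv B '' Q)
      (p := fun g _ => (∀ γ ∈ U, g γ ∈ U) ∧ (∀ γ ∈ U, g⁻¹ γ ∈ U)) ?_ ?_ ?_ ?_ hw
    · rintro g ⟨q, hq, rfl⟩
      rw [reflEquiv_inv]
      exact ⟨fun γ hγ => hgenstab q hq γ hγ, fun γ hγ => hgenstab q hq γ hγ⟩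
    · exact ⟨fun γ hγ => hγ, by rw [inv_one]; exact fun γ hγ => hγ⟩
    · rintro g g' _ _ ⟨hg, hgi⟩ ⟨hg', hgi'⟩
      refine ⟨fun γ hγ => ?_, ?_⟩
      · rw [lequiv_mul_apply]
        exact hg _ (hg' _ hγ)
      · rw [mul_inv_rev]
        intro γ hγ
        rw [lequiv_mul_apply]
        exact hgi' _ (hgi _ hγ)
    · rintro g _ ⟨hg, hgi⟩
      exact ⟨hgi, by rw [inv_inv]; exact hg⟩
  -- Q is contained in U
  have hQU : Q ⊆ U := by
    by_contra hnot
    rw [Set.not_subset] at hnot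
    obtain ⟨q', hq', hq'U⟩ := hnot
    have h1ne : (Q ∩ U).Nonempty := by
      obtain ⟨w, hw, a, ha, hwa⟩ := hβ₀
      have : w⁻¹ β₀ ∈ U := (hWstab w hw).2 β₀ hβ₀U
      rw [← hwa] at this
      rw [lequiv_inv_apply, LinearEquiv.symm_apply_apply] at this
      exact ⟨a, ha, this⟩
    refine no_orth_split hR hsl (Q₁ := Q ∩ U) (Q₂ := Q \ U)
      (fun x hx => hQ hx.1) (fun x hx => hQ hx.1) ?_ ?_ h1ne ⟨q', hq', hq'U⟩
    · rw [Set.inter_union_diff]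
      exact hgen
    · intro x hx y hy
      by_contra hne
      exact hy.2 (hUstep x hx.2 y (mem_orbit_of_mem hy.1) (by rw [hR.symm y x]; exact hne))
  -- conclude
  intro γ hγ
  obtain ⟨w, hw, a, ha, hwa⟩ := hγ
  have : w a ∈ U := (hWstab w hw).1 a (hQU ha)
  rw [hwa] at this
  exact this.2

end Aux11
section Aux12

variable {V : Type*} [AddCommGroup V] [Module ℝ V]
variable {B : LinearMap.BilinForm ℝ V} {R Q : Set V}

theorem list_sum_nonpos {l : List ℝ} (h : ∀ x ∈ l, x ≤ 0) : l.sum ≤ 0 := by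
  induction l with
  | nil => simp
  | cons a t ih =>
    simp only [List.sum_cons]
    have h1 := h a (by simp)
    have h2 := ih (fun x hx => h x (by simp [hx]))
    linarith

theorem list_sum_map_neg (l : List V) : (l.map (fun z : V => -z)).sum = -l.sum := by
  induction l with
  | nil => simp
  | cons a t ih =>
    simp [ih, neg_add]
    abel

theorem mem_closure_iff_list {S : Set V} {x : V} :
    x ∈ AddSubgroup.closure S ↔
      ∃ l : List V, (∀ y ∈ l, y ∈ S ∨ -y ∈ S) ∧ l.sum = x := by
  constructor
  · intro hx
    refine AddSubgroup.closure_induction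
      (p := fun z _ => ∃ l : List V, (∀ y ∈ l, y ∈ S ∨ -y ∈ S) ∧ l.sum = z) ?_ ?_ ?_ ?_ hx
    · intro y hy
      exact ⟨[y], fun z hz => by rw [List.mem_singleton] at hz; rw [hz]; exact Or.inl hy,
        by simp⟩
    · exact ⟨[], by simp, by simp⟩
    · rintro a b _ _ ⟨l₁, hl₁, hs₁⟩ ⟨l₂, hl₂, hs₂⟩
      refine ⟨l₁ ++ l₂, ?_, by rw [List.sum_append, hs₁, hs₂]⟩
      intro y hy
      rcases List.mem_append.mp hy with h | h
      · exact hl₁ y h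
      · exact hl₂ y h
    · rintro a _ ⟨l, hl, hs⟩
      refine ⟨l.map (fun z : V => -z), ?_, ?_⟩
      · intro y hy
        obtain ⟨z, hz, rfl⟩ := List.mem_map.mp hy
        rcases hl z hz with h | h
        · exact Or.inr (by rwa [neg_neg])
        · exact Or.inl h
      · rw [list_sum_map_neg, hs]
  · rintro ⟨l, hl, rfl⟩
    induction l with
    | nil =>
      simp only [List.sum_nil]
      exact zero_mem _
    | cons a t ih =>
      simp only [List.sum_cons]
      refine add_mem ?_ (ih (fun y hy => hl y (by simp [hy])))
      rcases hl a (by simp) with h | h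
      · exact AddSubgroup.subset_closure h
      · have := neg_mem (AddSubgroup.subset_closure h)
        rwa [neg_neg] at this

end Aux12
section Aux13

variable {V : Type*} [AddCommGroup V] [Module ℝ V]
variable {B : LinearMap.BilinForm ℝ V} {R Q : Set V}

/-- The main mutual induction: roots with short representations lie in the orbit,
and radical differences with short representations act on the orbit. -/
theorem main_induction [FiniteDimensional ℝ V] (hR : IsEARS B R)
    (hsl : IsSimplyLaced B R) (hrank : 1 < rank B) (hQ : Q ⊆ nonIso B R)
    (hgen : AddSubgroup.closure Q = AddSubgroup.closure R) : ∀ m : ℕ,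
    (∀ α ∈ nonIso B R, ∀ l : List V, (∀ y ∈ l, y ∈ Q ∨ -y ∈ Q) → l.sum = α →
      l.length ≤ m → α ∈ reflOrbit B Q) ∧
    (∀ δ : V, (∀ y, B δ y = 0) → (∃ γ, γ ∈ nonIso B R ∧ γ + δ ∈ nonIso B R) →
      ∀ l : List V, (∀ y ∈ l, y ∈ Q ∨ -y ∈ Q) → l.sum = δ → l.length ≤ m →
      ∀ γ ∈ reflOrbit B Q, γ + δ ∈ reflOrbit B Q) := by
  classical
  have hTn : reflOrbit B Q ⊆ nonIso B R := orbit_subset_nonIso hR hQ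
  have memT : ∀ u : V, u ∈ Q ∨ -u ∈ Q → u ∈ reflOrbit B Q := by
    rintro u (h | h)
    · exact mem_orbit_of_mem h
    · have := orbit_neg hQ (mem_orbit_of_mem h)
      rwa [neg_neg] at this
  intro m
  induction m with
  | zero =>
    constructor
    · intro α hα l _ hsum hlen
      rw [Nat.le_zero, List.length_eq_zero_iff] at hlen
      rw [hlen, List.sum_nil] at hsum
      exact absurd (by rw [← hsum]; simp) hα.2
    · intro δ _ _ l _ hsum hlen γ hγ
      rw [Nat.le_zero, List.length_eq_zero_iff] at hlen
      rw [hlen, List.sum_nil] at hsum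
      rw [← hsum, add_zero]
      exact hγ
  | succ m ih =>
    constructor
    · -- roots of representation length ≤ m + 1
      intro α hα l hl hsum hlen
      have hpos : ∃ y ∈ l, 0 < B α y := by
        by_contra hcon
        push_neg at hcon
        have h1 : B α l.sum = (l.map (B α)).sum := map_list_sum (B α) l
        have h2 : (l.map (B α)).sum ≤ 0 := by
          refine list_sum_nonpos ?_
          intro x hx
          obtain ⟨y, hy, rfl⟩ := List.mem_map.mp hx
          exact hcon y hy
        rw [hsum] at h1
        have := norm_pos hR hα
        linarith [h1 ▸ h2]
      obtain ⟨u, hu, hBu⟩ := hpos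
      have huT : u ∈ reflOrbit B Q := memT u (hl u hu)
      have hun : u ∈ nonIso B R := hTn huT
      have hku : 0 < B u u := norm_pos hR hun
      have herase_sum : (l.erase u).sum = α - u := by
        have h := List.sum_erase hu
        rw [hsum] at h
        rw [← h]
        abel
      have herase_len : (l.erase u).length ≤ m := by
        have h := List.length_erase_add_one hu
        omega
      have herase_mem : ∀ y ∈ l.erase u, y ∈ Q ∨ -y ∈ Q :=
        fun y hy => hl y (List.mem_of_mem_erase hy)
      rcases pairing_classify hR hsl hun hα with h | h | h | h | h
      · exact absurd h (by intro h0; rw [h0] at hBu; exact lt_irrefl 0 hBu)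
      · -- pairing 1 : recurse on α - u
        have hα' : α - u ∈ nonIso B R := by
          have := reflMap_mem_nonIso hR hun hα
          rwa [reflMap_eq_sub hun.2 h] at this
        have hT' : α - u ∈ reflOrbit B Q :=
          ih.1 (α - u) hα' (l.erase u) herase_mem herase_sum herase_len
        have hc : 2 * B (α - u) u = -B u u := by
          simp only [map_sub, LinearMap.sub_apply]
          linarith
        have : reflMap B u (α - u) = α - u + u := reflMap_eq_add hun.2 hc
        have hm := orbit_reflMap hR hQ huT hT'
        rw [this] at hm
        have he : α = α - u + u := by abel
        rwa [← he] at hm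
      · linarith
      · -- pairing 2 : α - u is radical, use the translation machinery
        have hδrad : ∀ y, B (α - u) y = 0 := h.2
        have h0 : ∃ γ, γ ∈ nonIso B R ∧ γ + (α - u) ∈ nonIso B R := by
          refine ⟨u, hun, ?_⟩
          have : u + (α - u) = α := by abel
          rwa [this]
        have := ih.2 (α - u) hδrad h0 (l.erase u) herase_mem herase_sum herase_len u huT
        have he : u + (α - u) = α := by abel
        rwa [he] at this
      · linarith [h.1]
    · -- radical vectors of representation length ≤ m + 1
      intro δ hδ h0 l hl hsum hlen γ hγ
      cases l with
      | nil =>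
        rw [List.sum_nil] at hsum
        rw [← hsum, add_zero]
        exact hγ
      | cons y l' =>
        have hyT : y ∈ reflOrbit B Q := memT y (hl y (by simp))
        have hyn : y ∈ nonIso B R := hTn hyT
        have hnyT : -y ∈ reflOrbit B Q := orbit_neg hQ hyT
        have hsum' : l'.sum = δ - y := by
          rw [List.sum_cons] at hsum
          rw [← hsum]
          abel
        have hlen' : l'.length ≤ m := by
          simp only [List.length_cons] at hlen
          omega
        have hmem' : ∀ z ∈ l', z ∈ Q ∨ -z ∈ Q := fun z hz => hl z (by simp [hz])
        have hδyn : δ - y ∈ nonIso B R := by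
          have := translate_nonIso hR hsl hrank hδ h0 (-y) (neg_mem_nonIso hR hyn)
          have he : -y + δ = δ - y := by abel
          rwa [he] at this
        have hδyT : δ - y ∈ reflOrbit B Q :=
          ih.1 (δ - y) hδyn l' hmem' hsum' hlen'
        have hβδ : -y + δ ∈ reflOrbit B Q := by
          have he : -y + δ = δ - y := by abel
          rwa [he]
        exact (translate_orbit hR hsl hrank hQ hgen hδ hnyT hβδ γ hγ).1

end Aux13
section Aux14

variable {V : Type*} [AddCommGroup V] [Module ℝ V]
variable {B : LinearMap.BilinForm ℝ V} {R Q : Set V}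

theorem orbit_subset_closure (hR : IsEARS B R) (hQ : Q ⊆ nonIso B R) :
    reflOrbit B Q ⊆ (AddSubgroup.closure Q : Set V) := by
  rintro x ⟨w, hw, a, ha, rfl⟩
  have h1 : w a - a ∈ AddSubgroup.closure Q :=
    ((weylOn_props hR hQ hw).1.2 a (hQ ha).1).2
  have h2 : a ∈ AddSubgroup.closure Q := AddSubgroup.subset_closure ha
  have : w a = (w a - a) + a := by abel
  rw [this]
  exact add_mem h1 h2

/-- Hard direction: a generating subset of `R^×` is a reflectable set. -/
theorem isReflSet_of_gen [FiniteDimensional ℝ V] (hR : IsEARS B R)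
    (hsl : IsSimplyLaced B R) (hrank : 1 < rank B) (hQ : Q ⊆ nonIso B R)
    (hgen : AddSubgroup.closure Q = AddSubgroup.closure R) : IsReflSet B R Q := by
  refine ⟨hQ, Set.Subset.antisymm (orbit_subset_nonIso hR hQ) ?_⟩
  intro α hα
  have hαcl : α ∈ AddSubgroup.closure Q := by
    rw [hgen]
    exact AddSubgroup.subset_closure hα.1
  obtain ⟨l, hl, hs⟩ := mem_closure_iff_list.mp hαcl
  exact (main_induction hR hsl hrank hQ hgen l.length).1 α hα l hl hs le_rfl

/-- Easy direction: a reflectable set generates the root lattice. -/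
theorem gen_of_isReflSet (hR : IsEARS B R) (h : IsReflSet B R Q) :
    AddSubgroup.closure Q = AddSubgroup.closure R := by
  have hQ : Q ⊆ nonIso B R := h.1
  apply le_antisymm
  · exact AddSubgroup.closure_le _ |>.mpr
      (fun q hq => AddSubgroup.subset_closure (hQ hq).1)
  · refine AddSubgroup.closure_le _ |>.mpr ?_
    intro x hx
    rcases eq_or_ne (B x x) 0 with h0 | h0
    · -- isotropic roots are differences of nonisotropic ones
      have hker : x ∈ (LinearMap.ker B : Set V) :=
        mem_ker_of_rad (rad_of_isotropic hR.symm hR.posSemidef h0)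
      have hx2 : x ∈ (LinearMap.ker B : Set V) ∩ (nonIso B R - nonIso B R) := by
        rw [← hR.isoEq]
        exact ⟨hx, hker⟩
      obtain ⟨a, ha, b, hb, hab⟩ := hx2.2
      rw [← h.2] at ha hb
      have haQ : a ∈ AddSubgroup.closure Q := orbit_subset_closure hR hQ ha
      have hbQ : b ∈ AddSubgroup.closure Q := orbit_subset_closure hR hQ hb
      rw [← hab]
      exact sub_mem haQ hbQ
    · have : x ∈ reflOrbit B Q := by rw [h.2]; exact ⟨hx, h0⟩
      exact orbit_subset_closure hR hQ this

end Aux14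
/-- Recognition theorem for reflectable bases in simply laced types
of rank `> 1`: if `Π ⊆ R^×` generates `⟨R⟩`, then `Π` is a reflectable base iff
`Π` is a minimal generating set of the free abelian group `⟨R⟩`. -/
theorem reflBase_iff_minimal_lattice_generating_set
    {V : Type*} [AddCommGroup V] [Module ℝ V] [FiniteDimensional ℝ V]
    (B : LinearMap.BilinForm ℝ V) (R : Set V) (hR : IsEARS B R) (hred : IsReduced B R)
    (hsl : IsSimplyLaced B R) (hrank : 1 < rank B)
    (Pi : Set V) (hPix : Pi ⊆ nonIso B R)
    (hgen : AddSubgroup.closure Pi = AddSubgroup.closure R) :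
    IsReflBase B R Pi ↔
      ∀ Q ⊆ Pi, Q ≠ Pi → AddSubgroup.closure Q ≠ AddSubgroup.closure R := by
  constructor
  · intro hbase Q hQP hQne hcl
    have hQx : Q ⊆ nonIso B R := Set.Subset.trans hQP hPix
    exact hbase.2 Q hQP hQne (isReflSet_of_gen hR hsl hrank hQx hcl)
  · intro hmin
    refine ⟨isReflSet_of_gen hR hsl hrank hPix hgen, ?_⟩
    intro Q hQP hQne hrs
    exact hmin Q hQP hQne (gen_of_isReflSet hR hrs)

end EARSPaper
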